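/- Let 0 < m < 1 and ε > 0. For each k > 0, let σ₊(k) denote the unique eigenvalue of the local-interaction linear-stability matrix A₀(k) with positive real part (which is real and positive). Then σ₊ is strictly increasing: for all 0 < k₁ < k₂, σ₊(k₁) < σ₊(k₂). Hence the growth rate increases without a maximizing wavenumber, so the δ → 0 problem is ill-posed, with arbitrarily large wavenumbers growing fastest. -/

import Mathlib

/-- The local-interaction (`δ → 0`) linear-stability matrix `A₀(k)` for parameters
`m, ε` and wavenumber `k`:
`A₀(k) = [[a,0,0,c],[0,a,c,0],[d,0,−b,0],[0,d,0,−b]]` with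
`a = (1/(1+m)² − 1)k²`, `b = (1+m)/ε`, `c = −2(2 − 1/(1+m))k²`, `d = m/(ε(1+m))`. -/
noncomputable def A0 (m ε k : ℝ) : Matrix (Fin 4) (Fin 4) ℝ :=
  !![(1 / (1 + m) ^ 2 - 1) * k ^ 2, 0, 0, -2 * (2 - 1 / (1 + m)) * k ^ 2;
     0, (1 / (1 + m) ^ 2 - 1) * k ^ 2, -2 * (2 - 1 / (1 + m)) * k ^ 2, 0;
     m / (ε * (1 + m)), 0, -((1 + m) / ε), 0;
     0, m / (ε * (1 + m)), 0, -((1 + m) / ε)]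

/-!
The matrix `A₀(k) - σ` has the block form `[[(a - σ) I, c J], [d I, -(b + σ) I]]` with `J` the
swap, whose blocks commute, so its determinant is
`((σ - a)(σ + b) - cd)((σ - a)(σ + b) + cd)`. For `σ > 0` the first factor is positive, because
`a ≤ 0 ≤ b` and `cd ≤ 0`. Writing `a = α k²`, `c = γ k²`, the second factor vanishes iff
`σ (σ + b) = k² (αb - γd + ασ)`: as `σ` grows the left side increases and, since `α ≤ 0`, the
right side decreases, so a larger `k²` forces a larger root `σ`.
-/

theorem det_of_scalar_swap_blocks {R : Type*} [CommRing R] (a c d e : R) :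
    !![a, 0, 0, c; 0, a, c, 0; d, 0, e, 0; 0, d, 0, e].det = (a * e - c * d) * (a * e + c * d) := by
  rw [Matrix.det_succ_row_zero]
  simp [Fin.sum_univ_succ, Matrix.det_fin_three, Fin.succAbove]
  ring

namespace A0

noncomputable def α (m : ℝ) : ℝ := 1 / (1 + m) ^ 2 - 1

noncomputable def b (m ε : ℝ) : ℝ := (1 + m) / ε

noncomputable def γ (m : ℝ) : ℝ := -2 * (2 - 1 / (1 + m))

noncomputable def d (m ε : ℝ) : ℝ := m / (ε * (1 + m))

variable {m ε : ℝ}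

theorem α_nonpos (hm : 0 ≤ m) : α m ≤ 0 :=
  sub_nonpos.2 (div_le_one_of_le₀ (one_le_pow₀ (by linarith)) (by positivity))

theorem b_nonneg (hm : 0 ≤ m) (hε : 0 ≤ ε) : 0 ≤ b m ε := by
  unfold b; positivity

theorem γ_nonpos (hm : 0 ≤ m) : γ m ≤ 0 := by
  have : 1 / (1 + m) ≤ 1 := div_le_one_of_le₀ (by linarith) (by linarith)
  rw [γ]; linarith

theorem d_nonneg (hm : 0 ≤ m) (hε : 0 ≤ ε) : 0 ≤ d m ε := by
  unfold d; positivity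

theorem sub_smul_one_eq (k σ : ℝ) :
    A0 m ε k - σ • (1 : Matrix (Fin 4) (Fin 4) ℝ) =
      !![α m * k ^ 2 - σ, 0, 0, γ m * k ^ 2;
         0, α m * k ^ 2 - σ, γ m * k ^ 2, 0;
         d m ε, 0, -b m ε - σ, 0;
         0, d m ε, 0, -b m ε - σ] := by
  ext i j
  fin_cases i <;> fin_cases j <;> simp [A0, α, b, γ, d]

theorem det_sub_smul_one (k σ : ℝ) :
    (A0 m ε k - σ • (1 : Matrix (Fin 4) (Fin 4) ℝ)).det =
      ((σ - α m * k ^ 2) * (σ + b m ε) - γ m * k ^ 2 * d m ε) *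
      ((σ - α m * k ^ 2) * (σ + b m ε) + γ m * k ^ 2 * d m ε) := by
  rw [sub_smul_one_eq, det_of_scalar_swap_blocks]
  ring

theorem dispersion_relation (hm : 0 ≤ m) (hε : 0 ≤ ε) {k σ : ℝ} (hσ : 0 < σ)
    (hdet : (A0 m ε k - σ • (1 : Matrix (Fin 4) (Fin 4) ℝ)).det = 0) :
    (σ - α m * k ^ 2) * (σ + b m ε) + γ m * k ^ 2 * d m ε = 0 := by
  have hprod : 0 < (σ - α m * k ^ 2) * (σ + b m ε) := by
    have := mul_nonpos_of_nonpos_of_nonneg (α_nonpos hm) (sq_nonneg k)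
    have := b_nonneg hm hε
    exact mul_pos (by linarith) (by linarith)
  have hcd : γ m * k ^ 2 * d m ε ≤ 0 :=
    mul_nonpos_of_nonpos_of_nonneg
      (mul_nonpos_of_nonpos_of_nonneg (γ_nonpos hm) (sq_nonneg k)) (d_nonneg hm hε)
  rw [det_sub_smul_one] at hdet
  exact (mul_eq_zero.mp hdet).resolve_left (by linarith)

end A0

theorem lt_of_pos_roots_of_lt {α γ b d K₁ K₂ σ₁ σ₂ : ℝ} (hα : α ≤ 0) (hb : 0 ≤ b)
    (hK₁ : 0 ≤ K₁) (hK : K₁ < K₂) (hσ₁ : 0 < σ₁) (hσ₂ : 0 < σ₂)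
    (h₁ : (σ₁ - α * K₁) * (σ₁ + b) + γ * K₁ * d = 0)
    (h₂ : (σ₂ - α * K₂) * (σ₂ + b) + γ * K₂ * d = 0) :
    σ₁ < σ₂ := by
  by_contra! hle
  have e₁ : σ₁ * (σ₁ + b) = K₁ * (α * b - γ * d + α * σ₁) := by linear_combination h₁
  have e₂ : σ₂ * (σ₂ + b) = K₂ * (α * b - γ * d + α * σ₂) := by linear_combination h₂
  have hpos : 0 < α * b - γ * d + α * σ₁ := pos_of_mul_pos_right (e₁ ▸ by positivity) hK₁
  have hlt : σ₁ * (σ₁ + b) < σ₂ * (σ₂ + b) :=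
    calc σ₁ * (σ₁ + b) = K₁ * (α * b - γ * d + α * σ₁) := e₁
      _ < K₂ * (α * b - γ * d + α * σ₁) := mul_lt_mul_of_pos_right hK hpos
      _ ≤ K₂ * (α * b - γ * d + α * σ₂) := by
        have := mul_le_mul_of_nonpos_left hle hα
        gcongr
        linarith
      _ = σ₂ * (σ₂ + b) := e₂.symm
  have hle' : σ₂ * (σ₂ + b) ≤ σ₁ * (σ₁ + b) := by gcongr
  linarith

theorem local_growth_rate_strictly_increasing_general
    (m ε : ℝ) (hm0 : 0 < m) (hε : 0 < ε)
    (k₁ k₂ σ₁ σ₂ : ℝ) (hk₁ : 0 < k₁) (hk₁₂ : k₁ < k₂)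
    (hσ₁ : 0 < σ₁) (hσ₂ : 0 < σ₂)
    (heig₁ : (A0 m ε k₁ - σ₁ • (1 : Matrix (Fin 4) (Fin 4) ℝ)).det = 0)
    (heig₂ : (A0 m ε k₂ - σ₂ • (1 : Matrix (Fin 4) (Fin 4) ℝ)).det = 0) :
    σ₁ < σ₂ :=
  lt_of_pos_roots_of_lt (A0.α_nonpos hm0.le) (A0.b_nonneg hm0.le hε.le) (sq_nonneg k₁)
    (pow_lt_pow_left₀ hk₁₂ hk₁.le two_ne_zero) hσ₁ hσ₂
    (A0.dispersion_relation hm0.le hε.le hσ₁ heig₁) (A0.dispersion_relation hm0.le hε.le hσ₂ heig₂)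

/-- Let `0 < m < 1` and `ε > 0`.  For `k > 0` the unique eigenvalue
of `A₀(k)` with positive real part is real and positive; writing `σ₊(k)` for it, the
map `k ↦ σ₊(k)` is strictly increasing.  Formally: if `0 < k₁ < k₂` and `σ₁, σ₂ > 0`
are positive real eigenvalues of `A₀(k₁)`, `A₀(k₂)` respectively, then `σ₁ < σ₂`.
Hence the growth rate has no maximizing wavenumber and the `δ → 0` problem is
ill-posed, with arbitrarily large wavenumbers growing fastest. -/
theorem local_growth_rate_strictly_increasing
    (m ε : ℝ) (hm0 : 0 < m) (hm1 : m < 1) (hε : 0 < ε)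
    (k₁ k₂ σ₁ σ₂ : ℝ) (hk₁ : 0 < k₁) (hk₁₂ : k₁ < k₂)
    (hσ₁ : 0 < σ₁) (hσ₂ : 0 < σ₂)
    (heig₁ : (A0 m ε k₁ - σ₁ • (1 : Matrix (Fin 4) (Fin 4) ℝ)).det = 0)
    (heig₂ : (A0 m ε k₂ - σ₂ • (1 : Matrix (Fin 4) (Fin 4) ℝ)).det = 0) :
    σ₁ < σ₂ :=
  local_growth_rate_strictly_increasing_general m ε hm0 hε k₁ k₂ σ₁ σ₂ hk₁ hk₁₂ hσ₁ hσ₂ heig₁ heig₂
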